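/- With the notation above (f_1, ..., f_{g-1} edges whose removal leaves a connected graph G' with unique cycle C), the hyperplane H = span{π(f_1), ..., π(f_{g-1})} in H_1(G,ℝ) equals the orthogonal complement of C within H_1(G,ℝ), i.e., H = C^⊥ ∩ H_1(G,ℝ). -/

import Mathlib

/-!
For `z ∈ H₁(G,ℝ)` we have `⟪π(f), z⟫ = z(f)`. Hence every `π(f)`, `f ∈ S`, is orthogonal to `C`,
and a cycle orthogonal to all of them vanishes on `S`, i.e. is a cycle of `G' = G - S`. Since `G'`
is connected with `|E| - |S| = |V|` edges, its cycle space is at most one-dimensional, so it is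
spanned by `C`. Thus inside `H₁(G,ℝ)` the orthogonal complement of `span π(S)` lies in `ℝ C`, which
forces `span π(S) = C^⊥ ∩ H₁(G,ℝ)`.
-/

open scoped Classical

variable {V E : Type} [Fintype V] [Fintype E] [DecidableEq V] [DecidableEq E]

/-- Reachability between vertices using (undirected) edges from the set `A`. -/
def ReachIn (ι : E → V × V) (A : Set E) (a b : V) : Prop :=
  Relation.ReflTransGen (fun x y => ∃ e ∈ A, ι e = (x, y) ∨ ι e = (y, x)) a b

/-- The graph with edge set `A` (on all of `V`) is connected. -/
def Conn (ι : E → V × V) (A : Set E) : Prop := ∀ a b : V, ReachIn ι A a b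

/-- `C : E → ℤ` is the signed indicator vector of a (simple, directed) cycle:
entries in `{-1,0,1}`, nonempty support, zero boundary, every vertex meets
0 or 2 support edges, and the support is connected. -/
def IsCycleVec (ι : E → V × V) (C : E → ℤ) : Prop :=
  (∀ e, C e = 0 ∨ C e = 1 ∨ C e = -1) ∧
  (∃ e, C e ≠ 0) ∧
  (∀ v : V, ∑ e : E, C e *
      ((if (ι e).2 = v then 1 else 0) - (if (ι e).1 = v then 1 else 0)) = 0) ∧
  (∀ v : V,
    (Finset.univ.filter fun e => C e ≠ 0 ∧ ((ι e).1 = v ∨ (ι e).2 = v)).card = 0 ∨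
    (Finset.univ.filter fun e => C e ≠ 0 ∧ ((ι e).1 = v ∨ (ι e).2 = v)).card = 2) ∧
  (∀ a b : V, (∃ e, C e ≠ 0 ∧ ((ι e).1 = a ∨ (ι e).2 = a)) →
    (∃ e, C e ≠ 0 ∧ ((ι e).1 = b ∨ (ι e).2 = b)) →
    ReachIn ι {e | C e ≠ 0} a b)

/-- The standard basis vector of an edge in the real edge space. -/
noncomputable def edgeVec (f : E) : EuclideanSpace ℝ E := EuclideanSpace.single f 1

/-- The real vector of an integral cycle vector. -/
def cycVecR (C : E → ℤ) : EuclideanSpace ℝ E := WithLp.toLp 2 (fun e => ((C e : ℝ)))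

/-- The cycle space `H₁(G,ℝ)`: the span of the signed cycle vectors. -/
noncomputable def cycleSpace (ι : E → V × V) : Submodule ℝ (EuclideanSpace ℝ E) :=
  Submodule.span ℝ {x | ∃ C : E → ℤ, IsCycleVec ι C ∧ x = cycVecR C}

/-- `π(f)`: the orthogonal projection of the edge basis vector onto the cycle space. -/
noncomputable def projCyc (ι : E → V × V) (f : E) : EuclideanSpace ℝ E :=
  (Submodule.orthogonalProjectionOnto (cycleSpace ι) (edgeVec f) : EuclideanSpace ℝ E)

section LinearAlgebra

variable {K M N : Type*} [Field K] [AddCommGroup M] [Module K M] [AddCommGroup N] [Module K N]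

theorem Submodule.finrank_map_add_finrank_inf_ker (f : M →ₗ[K] N) (Z : Submodule K M)
    [FiniteDimensional K Z] :
    Module.finrank K (Z.map f) + Module.finrank K ↥(Z ⊓ LinearMap.ker f) = Module.finrank K Z := by
  rw [← LinearMap.range_domRestrict, ← (f.domRestrict Z).finrank_range_add_finrank_ker,
    LinearMap.ker_domRestrict]
  have hker : (LinearMap.ker f).comap Z.subtype = (Z ⊓ LinearMap.ker f).comap Z.subtype := by
    ext x
    simp
  rw [hker, (Submodule.comapSubtypeEquivOfLe inf_le_left).finrank_eq]

theorem card_le_finrank_add_one_of_single_sub_single_mem {n : Type*} [Fintype n] [DecidableEq n]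
    (W : Submodule K (n → K)) (hW : ∀ a b : n, Pi.single b 1 - Pi.single a 1 ∈ W) :
    Fintype.card n ≤ Module.finrank K W + 1 := by
  rcases isEmpty_or_nonempty n with hn | ⟨⟨a⟩⟩
  · simp
  have htop : W ⊔ (K ∙ Pi.single a 1) = ⊤ := by
    refine eq_top_iff.2 ((Pi.basisFun K n).span_eq ▸ Submodule.span_le.2 ?_)
    rintro _ ⟨b, rfl⟩
    simpa using add_mem (Submodule.mem_sup_left (hW a b))
      (Submodule.mem_sup_right (Submodule.mem_span_singleton_self (Pi.single a 1 : n → K)))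
  calc Fintype.card n = Module.finrank K ↥(W ⊔ (K ∙ (Pi.single a 1 : n → K))) := by
        rw [htop, finrank_top, Module.finrank_fintype_fun_eq_card]
    _ ≤ Module.finrank K W + Module.finrank K (K ∙ (Pi.single a 1 : n → K)) :=
      Submodule.finrank_add_le_finrank_add_finrank _ _
    _ = Module.finrank K W + 1 := by rw [finrank_span_singleton (by simp)]

end LinearAlgebra

section InnerProduct

variable {𝕜 F : Type*} [RCLike 𝕜] [NormedAddCommGroup F] [InnerProductSpace 𝕜 F]

theorem Submodule.eq_orthogonal_inf_of_orthogonal_inf_le {L K M : Submodule 𝕜 F}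
    [L.HasOrthogonalProjection] (hLK : L ≤ K) (hLM : L ≤ Mᗮ) (h : Lᗮ ⊓ K ≤ M) :
    L = Mᗮ ⊓ K := by
  refine le_antisymm (le_inf hLM hLK) fun z ⟨hzM, hzK⟩ => ?_
  have hPz : L.starProjection z ∈ L := L.starProjection_apply_mem z
  have hM : z - L.starProjection z ∈ M :=
    h ⟨L.sub_starProjection_mem_orthogonal z, sub_mem hzK (hLK hPz)⟩
  have hMperp : z - L.starProjection z ∈ Mᗮ := sub_mem hzM (hLM hPz)
  have hzero : z - L.starProjection z ∈ M ⊓ Mᗮ := ⟨hM, hMperp⟩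
  rw [M.inf_orthogonal_eq_bot, Submodule.mem_bot, sub_eq_zero] at hzero
  rwa [hzero]

end InnerProduct

section Graph

set_option linter.unusedSectionVars false

variable (ι : E → V × V)

noncomputable def boundary : EuclideanSpace ℝ E →ₗ[ℝ] (V → ℝ) :=
  Fintype.linearCombination ℝ (fun e => Pi.single (ι e).2 1 - Pi.single (ι e).1 1) ∘ₗ
    (WithLp.linearEquiv 2 ℝ (E → ℝ)).toLinearMap

theorem boundary_edgeVec (e : E) :
    boundary ι (edgeVec e) = Pi.single (ι e).2 1 - Pi.single (ι e).1 1 := by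
  simp [boundary, edgeVec, WithLp.coe_linearEquiv]

theorem cycleSpace_le_ker_boundary : cycleSpace ι ≤ LinearMap.ker (boundary ι) := by
  refine Submodule.span_le.2 ?_
  rintro _ ⟨C, hC, rfl⟩
  funext v
  have hv := congrArg (Int.cast : ℤ → ℝ) (hC.2.2.1 v)
  push_cast at hv
  simpa [boundary, cycVecR, WithLp.coe_linearEquiv, Fintype.linearCombination_apply,
    Pi.single_apply, eq_comm] using hv

theorem inner_projCyc_of_mem (f : E) {z : EuclideanSpace ℝ E} (hz : z ∈ cycleSpace ι) :
    inner ℝ (projCyc ι f) z = z f :=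
  calc inner ℝ (projCyc ι f) z = inner ℝ (edgeVec f) z :=
        Submodule.inner_orthogonalProjectionOnto_eq_of_mem_right (K := cycleSpace ι) ⟨z, hz⟩ _
    _ = z f := by simp [edgeVec, EuclideanSpace.inner_single_left]

noncomputable def restrictEdges (S : Finset E) : EuclideanSpace ℝ E →ₗ[ℝ] (S → ℝ) :=
  LinearMap.funLeft ℝ ℝ ((↑) : S → E) ∘ₗ (WithLp.linearEquiv 2 ℝ (E → ℝ)).toLinearMap

theorem mem_ker_restrictEdges {S : Finset E} {x : EuclideanSpace ℝ E} :
    x ∈ LinearMap.ker (restrictEdges S) ↔ ∀ f ∈ S, x f = 0 := by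
  simp [restrictEdges, funext_iff, LinearMap.funLeft_apply, WithLp.coe_linearEquiv]

theorem finrank_ker_restrictEdges_add_card (S : Finset E) :
    Module.finrank ℝ (LinearMap.ker (restrictEdges S)) + S.card = Fintype.card E := by
  have hsurj : LinearMap.range (restrictEdges S) = ⊤ :=
    LinearMap.range_eq_top.2 <| (LinearMap.funLeft_surjective_of_injective ℝ ℝ _
      Subtype.val_injective).comp (WithLp.linearEquiv 2 ℝ (E → ℝ)).surjective
  have h := (restrictEdges S).finrank_range_add_finrank_ker
  rw [hsurj, finrank_top, Module.finrank_fintype_fun_eq_card, Fintype.card_coe,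
    finrank_euclideanSpace] at h
  omega

theorem single_sub_single_mem_map_boundary {S : Finset E} {a b : V}
    (h : ReachIn ι {e | e ∉ S} a b) :
    Pi.single b 1 - Pi.single a 1 ∈ (LinearMap.ker (restrictEdges S)).map (boundary ι) := by
  induction h with
  | refl => simp
  | @tail b c _ hbc ih =>
    obtain ⟨e, heS, hends⟩ := hbc
    have hedge : Pi.single (ι e).2 1 - Pi.single (ι e).1 1 ∈
        (LinearMap.ker (restrictEdges S)).map (boundary ι) := by
      refine ⟨edgeVec e, mem_ker_restrictEdges.2 fun f hf => ?_, boundary_edgeVec ι e⟩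
      simp [edgeVec, ne_of_mem_of_not_mem hf heS]
    rw [← sub_add_sub_cancel _ (Pi.single b 1)]
    refine add_mem ?_ ih
    rcases hends with hends | hends <;> rw [hends] at hedge
    · exact hedge
    · simpa using neg_mem hedge

/-- `ker (restrictEdges S)` is the edge space of `G - S`, so this bounds the cycle rank of the
connected graph `G - S` by `|E| - |S| - |V| + 1`. -/
theorem finrank_ker_restrictEdges_inf_ker_boundary_add_le {S : Finset E}
    (hconn : Conn ι {e | e ∉ S}) :
    Module.finrank ℝ ↥(LinearMap.ker (restrictEdges S) ⊓ LinearMap.ker (boundary ι)) +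
      Fintype.card V + S.card ≤ Fintype.card E + 1 := by
  have hrank := Submodule.finrank_map_add_finrank_inf_ker (boundary ι)
    (LinearMap.ker (restrictEdges S))
  have hrange := card_le_finrank_add_one_of_single_sub_single_mem _
    fun a b => single_sub_single_mem_map_boundary ι (hconn a b)
  have hdim := finrank_ker_restrictEdges_add_card S
  omega

theorem IsCycleVec.cycVecR_ne_zero {C : E → ℤ} (hC : IsCycleVec ι C) : cycVecR C ≠ 0 := by
  obtain ⟨e, he⟩ := hC.2.1
  intro h0
  exact he (by simpa [cycVecR] using congrArg (fun x : EuclideanSpace ℝ E => x e) h0)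

theorem ker_restrictEdges_inf_ker_boundary_le_span {S : Finset E}
    (hcard : S.card + Fintype.card V = Fintype.card E) (hconn : Conn ι {e | e ∉ S})
    {C : E → ℤ} (hC : IsCycleVec ι C) (hCS : ∀ e ∈ S, C e = 0) :
    LinearMap.ker (restrictEdges S) ⊓ LinearMap.ker (boundary ι) ≤ ℝ ∙ cycVecR C := by
  have hmem : cycVecR C ∈ LinearMap.ker (restrictEdges S) ⊓ LinearMap.ker (boundary ι) :=
    ⟨mem_ker_restrictEdges.2 fun f hf => by simp [cycVecR, hCS f hf],
      cycleSpace_le_ker_boundary ι (Submodule.subset_span ⟨C, hC, rfl⟩)⟩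
  refine (Submodule.eq_of_le_of_finrank_le
    ((Submodule.span_singleton_le_iff_mem _ _).2 hmem) ?_).ge
  have := finrank_ker_restrictEdges_inf_ker_boundary_add_le ι hconn
  rw [finrank_span_singleton (hC.cycVecR_ne_zero ι)]
  omega

end Graph

theorem span_proj_eq_cycle_perp_general (ι : E → V × V)
    (S : Finset E)
    (hcard : (S.card : ℤ) = (Fintype.card E : ℤ) - (Fintype.card V : ℤ))
    (hconn' : Conn ι {e | e ∉ S})
    (C : E → ℤ) (hC : IsCycleVec ι C) (hCS : ∀ e ∈ S, C e = 0) :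
    Submodule.span ℝ (projCyc ι '' (S : Set E)) =
      (Submodule.span ℝ {cycVecR C})ᗮ ⊓ cycleSpace ι := by
  have hcycles := ker_restrictEdges_inf_ker_boundary_le_span ι (by omega) hconn' hC hCS
  refine Submodule.eq_orthogonal_inf_of_orthogonal_inf_le ?_ ?_ ?_
  · refine Submodule.span_le.2 ?_
    rintro _ ⟨f, -, rfl⟩
    exact Submodule.coe_mem _
  · refine Submodule.span_le.2 ?_
    rintro _ ⟨f, hf, rfl⟩
    rw [SetLike.mem_coe, Submodule.mem_orthogonal_singleton_iff_inner_right, real_inner_comm,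
      inner_projCyc_of_mem ι f (Submodule.subset_span ⟨C, hC, rfl⟩)]
    simp [cycVecR, hCS f hf]
  · rintro z ⟨hzL, hzK⟩
    refine hcycles ⟨mem_ker_restrictEdges.2 fun f hf => ?_, cycleSpace_le_ker_boundary ι hzK⟩
    rw [← inner_projCyc_of_mem ι f hzK]
    exact (Submodule.mem_orthogonal _ z).1 hzL _ (Submodule.subset_span ⟨f, hf, rfl⟩)

/-- with `S` a set of `g-1` edges whose removal leaves a connected graph with
unique cycle `C`, the hyperplane `span{π(f) : f ∈ S}` of the cycle space equals
`C^⊥ ∩ H₁(G,ℝ)`. -/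
theorem span_proj_eq_cycle_perp (ι : E → V × V)
    (hconn : Conn ι Set.univ) (S : Finset E)
    (hcard : (S.card : ℤ) = (Fintype.card E : ℤ) - (Fintype.card V : ℤ))
    (hconn' : Conn ι {e | e ∉ S})
    (C : E → ℤ) (hC : IsCycleVec ι C) (hCS : ∀ e ∈ S, C e = 0) :
    Submodule.span ℝ (projCyc ι '' (S : Set E)) =
      (Submodule.span ℝ {cycVecR C})ᗮ ⊓ cycleSpace ι :=
  span_proj_eq_cycle_perp_general ι S hcard hconn' C hC hCS
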